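/- arXiv:1006.3437 — 2 statements merged into one kernel-verified Lean document; each statement's English description precedes it below -/
import Mathlib

section
/- Let τ = exp(−2πi/9) + exp(iπ/9)·2cos(2π/5) and p = 4. Then |τ̄² + e^{−2πi/4}·τ − τ|² = (7 + √5 − 3√3 − √15)/2, and this quantity is strictly less than 1. -/
open Real Complex

open ComplexConjugate

/-!
Put `w = exp (iπ/9)`, `ρ = w³ = exp (iπ/3)` and `g = 2 cos (2π/5) = (√5 - 1)/2`, so that
`g² + g = 1` and `τ = w⁻² (1 + gρ)`. Since `e^{-iπ/2} = -i`, the quantity is `conj τ ^ 2 - (1 + i) τ`;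
multiplied by the unimodular `w²` it becomes `ρ² (1 + g ρ̄)² - (1 + i)(1 + gρ)`, which involves only `ρ`
and `g`. The relations `ρ² = ρ - 1`, `ρ̄ = 1 - ρ` and `g² + g = 1` collapse it to
`-(i (1 + gρ) + (1 + g) ρ̄)`, whose squared norm is `4 + g - √3 (2 + g)`.
-/

theorem Real.two_mul_cos_two_pi_div_five : 2 * Real.cos (2 * π / 5) = (√5 - 1) / 2 := by
  rw [show 2 * π / 5 = 2 * (π / 5) by ring, Real.cos_two_mul, Real.cos_pi_div_five]
  linear_combination Real.sq_sqrt (show (0 : ℝ) ≤ 5 by norm_num) / 4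

theorem Complex.exp_neg_two_pi_mul_I_div_four : exp (-2 * π * I / 4) = -I := by
  rw [← exp_neg_pi_div_two_mul_I]
  ring_nf

theorem Complex.exp_pi_div_three_mul_I : exp (π / 3 * I) = (1 + √3 * I) / 2 := by
  rw [show (π / 3 : ℂ) = ((π / 3 : ℝ) : ℂ) by push_cast; rfl, exp_mul_I, ← ofReal_cos,
    ← ofReal_sin, Real.cos_pi_div_three, Real.sin_pi_div_three]
  push_cast
  ring

theorem exp_neg_two_pi_mul_I_div_nine_add_mul (g : ℂ) :
    exp (-2 * π * I / 9) + exp (I * π / 9) * g =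
      (exp ((π / 9 : ℝ) * I))⁻¹ ^ 2 * (1 + g * exp ((π / 9 : ℝ) * I) ^ 3) := by
  set w := exp ((π / 9 : ℝ) * I)
  have hw_inv_sq : exp (-2 * π * I / 9) = w⁻¹ ^ 2 := by
    rw [← Complex.exp_neg, ← Complex.exp_nat_mul]; push_cast; ring_nf
  have hw : exp (I * π / 9) = w := by push_cast [w]; ring_nf
  rw [hw_inv_sq, hw]
  field_simp [Complex.exp_ne_zero]

theorem norm_conj_sq_sub_mul_of_eq {w τ : ℂ} (hw : ‖w‖ = 1) {g : ℝ}
    (hτ : τ = w⁻¹ ^ 2 * (1 + g * w ^ 3)) (c : ℂ) :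
    ‖conj τ ^ 2 - c * τ‖ = ‖(w ^ 3) ^ 2 * (1 + g * conj (w ^ 3)) ^ 2 - c * (1 + g * w ^ 3)‖ := by
  have hw0 : w ≠ 0 := norm_ne_zero_iff.mp (hw ▸ one_ne_zero)
  have hconj : conj w = w⁻¹ := (inv_eq_conj hw).symm
  have key : w ^ 2 * (conj τ ^ 2 - c * τ) =
      (w ^ 3) ^ 2 * (1 + g * conj (w ^ 3)) ^ 2 - c * (1 + g * w ^ 3) := by
    simp only [hτ, map_mul, map_pow, map_add, map_one, map_inv₀, conj_ofReal, hconj, inv_inv]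
    field_simp
  rw [← key, norm_mul, norm_pow, hw, one_pow, one_mul]

theorem sq_mul_one_add_mul_one_sub_sq {R : Type*} [CommRing R] {ρ g : R}
    (hρ : ρ ^ 2 = ρ - 1) (hg : g ^ 2 + g = 1) :
    ρ ^ 2 * (1 + g * (1 - ρ)) ^ 2 = 1 + g * ρ - (1 + g) * (1 - ρ) := by
  linear_combination ((1 - g) * ρ ^ 2 - (1 + g) * ρ + g) * hρ + ρ ^ 2 * (1 - ρ) ^ 2 * hg

theorem sq_norm_rotated_shimizu_quantity {g : ℝ} (hg : g ^ 2 + g = 1) :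
    ‖((1 + √3 * I) / 2) ^ 2 * (1 + g * conj ((1 + √3 * I) / 2)) ^ 2 -
      (1 + I) * (1 + g * ((1 + √3 * I) / 2))‖ ^ 2 = 4 + g - √3 * (2 + g) := by
  set ρ : ℂ := (1 + √3 * I) / 2 with hρ_def
  have h3 : (√3 : ℂ) ^ 2 = 3 := by exact_mod_cast Real.sq_sqrt (show (0 : ℝ) ≤ 3 by norm_num)
  have hρ : ρ ^ 2 = ρ - 1 := by linear_combination (h3 * I ^ 2 + 3 * I_sq) / 4
  have hρc : conj ρ = 1 - ρ := by
    simp only [hρ_def, map_div₀, map_add, map_one, map_mul, conj_ofReal, conj_I, map_ofNat]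
    ring
  have hF : ρ ^ 2 * (1 + g * conj ρ) ^ 2 - (1 + I) * (1 + g * ρ) =
      -(((1 + g - g * √3) / 2 : ℝ) + ((2 + g - (1 + g) * √3) / 2 : ℝ) * I) := by
    rw [hρc, sq_mul_one_add_mul_one_sub_sq hρ (by exact_mod_cast hg)]
    push_cast
    linear_combination (-g * √3 / 2 : ℂ) * I_sq
  rw [hF, norm_neg, Complex.sq_norm, normSq_add_mul_I]
  linear_combination (2 - √3) * hg +
    ((1 + g) ^ 2 + g ^ 2) / 4 * Real.sq_sqrt (show (0 : ℝ) ≤ 3 by norm_num)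

theorem shimizu_closed_form_lt_one : (7 + √5 - 3 * √3 - √15) / 2 < 1 := by
  have h3 : (1.7 : ℝ) < √3 := by
    rw [Real.lt_sqrt (by norm_num)]; norm_num
  have h5 : √5 < 2.3 := by
    rw [Real.sqrt_lt' (by norm_num)]; norm_num
  have h15 : (3.8 : ℝ) < √15 := by
    rw [Real.lt_sqrt (by norm_num)]; norm_num
  linarith

theorem shimizu_quantity_sigma5bar (τ : ℂ)
    (hτ : τ = Complex.exp (-2 * π * I / 9) +
      Complex.exp (I * π / 9) * (2 * Real.cos (2 * π / 5))) :
    ‖(starRingEnd ℂ) τ ^ 2 + Complex.exp (-2 * π * I / 4) * τ - τ‖ ^ 2 =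
      (7 + Real.sqrt 5 - 3 * Real.sqrt 3 - Real.sqrt 15) / 2 ∧
    ‖(starRingEnd ℂ) τ ^ 2 + Complex.exp (-2 * π * I / 4) * τ - τ‖ ^ 2 < 1 := by
  set w := exp ((π / 9 : ℝ) * I)
  set g : ℝ := 2 * Real.cos (2 * π / 5)
  have hg5 : g = (√5 - 1) / 2 := Real.two_mul_cos_two_pi_div_five
  have hg : g ^ 2 + g = 1 := by
    rw [hg5]; linear_combination Real.sq_sqrt (show (0 : ℝ) ≤ 5 by norm_num) / 4
  have hw3 : w ^ 3 = (1 + √3 * I) / 2 := by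
    rw [← Complex.exp_nat_mul, ← exp_pi_div_three_mul_I]; push_cast; ring_nf
  have hτw : τ = w⁻¹ ^ 2 * (1 + g * w ^ 3) := by
    rw [hτ, exp_neg_two_pi_mul_I_div_nine_add_mul]
    simp only [g, ofReal_mul, ofReal_ofNat]
    rfl
  have hnorm : ‖conj τ ^ 2 + exp (-2 * π * I / 4) * τ - τ‖ ^ 2 = 4 + g - √3 * (2 + g) := by
    rw [exp_neg_two_pi_mul_I_div_four,
      show conj τ ^ 2 + -I * τ - τ = conj τ ^ 2 - (1 + I) * τ by ring,
      norm_conj_sq_sub_mul_of_eq (norm_exp_ofReal_mul_I _) hτw, hw3,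
      sq_norm_rotated_shimizu_quantity hg]
  have hval : 4 + g - √3 * (2 + g) = (7 + √5 - 3 * √3 - √15) / 2 := by
    rw [hg5, show (15 : ℝ) = 3 * 5 by norm_num, Real.sqrt_mul (by norm_num)]; ring
  rw [hnorm, hval]
  exact ⟨rfl, shimizu_closed_form_lt_one⟩
end

section
/- Suppose |τ|² = 2 and ψ = 2π/p. With R₁, J the standard generators and R₂ = JR₁J⁻¹, the matrix (R₁R₂)² is upper triangular with diagonal (−e^{4iπ/3p}, −e^{4iπ/3p}, e^{−8iπ/3p}); in particular it has a repeated eigenvalue −e^{4iπ/3p} and the ratio of the third eigenvalue to the repeated one is −e^{−4iπ/p} = e^{i(p−4)π/p}. -/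
/-!
Write `c = exp (iψ/3)`, so that `R₁` has diagonal `(c², c⁻¹, c⁻¹)`. Conjugating by the cyclic
permutation shifts the entries of `R₁`, and `R₁R₂` turns out to be block upper triangular with
upper-left block `[[c (1 - ττ̄), τc²], [-τ̄, c]]` and lower-right entry `c⁻²`. That block has
determinant `c²` for every `τ`, and trace `c (2 - |τ|²)`, which vanishes exactly when `|τ|² = 2`.
By Cayley–Hamilton a traceless `2 × 2` matrix squares to `-det` times the identity, so `(R₁R₂)²`
is upper triangular with diagonal `(-c², -c², c⁻⁴)`.
-/

open Real Complex Matrix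

section

variable {R : Type*} [CommRing R]

def cyclicPerm : Matrix (Fin 3) (Fin 3) R := of ![![0, 0, 1], ![1, 0, 0], ![0, 1, 0]]

theorem cyclicPerm_inv : (cyclicPerm : Matrix (Fin 3) (Fin 3) R)⁻¹ = cyclicPermᵀ := by
  refine inv_eq_left_inv ?_
  ext i j
  fin_cases i <;> fin_cases j <;> simp [cyclicPerm, mul_apply, Fin.sum_univ_three]

theorem cyclicPerm_mul_mul_inv (A : Matrix (Fin 3) (Fin 3) R) :
    cyclicPerm * A * cyclicPerm⁻¹ =
      of ![![A 2 2, A 2 0, A 2 1], ![A 0 2, A 0 0, A 0 1], ![A 1 2, A 1 0, A 1 1]] := by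
  rw [cyclicPerm_inv]
  ext i j
  fin_cases i <;> fin_cases j <;>
    simp [cyclicPerm, mul_apply, vecMul, dotProduct, Fin.sum_univ_three]

theorem sq_apply_of_traceless_block (M : Matrix (Fin 3) (Fin 3) R)
    (h20 : M 2 0 = 0) (h21 : M 2 1 = 0) (htr : M 0 0 + M 1 1 = 0) :
    (M ^ 2) 1 0 = 0 ∧ (M ^ 2) 2 0 = 0 ∧ (M ^ 2) 2 1 = 0 ∧
      (M ^ 2) 0 0 = -(M 0 0 * M 1 1 - M 0 1 * M 1 0) ∧
      (M ^ 2) 1 1 = -(M 0 0 * M 1 1 - M 0 1 * M 1 0) ∧ (M ^ 2) 2 2 = M 2 2 ^ 2 := by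
  have h11 : M 1 1 = -M 0 0 := by linear_combination htr
  simp only [sq, mul_apply, Fin.sum_univ_three, h20, h21, h11]
  refine ⟨by ring, by ring, by ring, by ring, by ring, by ring⟩

end

section

variable {K : Type*} [Field K]

def upperGenerator (c a b : K) : Matrix (Fin 3) (Fin 3) K :=
  of ![![c ^ 2, a, -c * b], ![0, c⁻¹, 0], ![0, 0, c⁻¹]]

theorem upperGenerator_mul_conj_cyclicPerm {c : K} (hc : c ≠ 0) (a b : K) :
    upperGenerator c a b * (cyclicPerm * upperGenerator c a b * cyclicPerm⁻¹) =
      of ![![c - c * a * b, a * c ^ 2, a ^ 2 - b], ![-b, c, c⁻¹ * a], ![0, 0, c⁻¹ ^ 2]] := by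
  rw [cyclicPerm_mul_mul_inv]
  ext i j
  fin_cases i <;> fin_cases j <;>
    simp [upperGenerator, mul_apply, Fin.sum_univ_three] <;> field_simp <;> ring

theorem sq_upperGenerator_mul_conj_cyclicPerm {c a b : K} (hc : c ≠ 0)
    (hab : a * b = 2) {M : Matrix (Fin 3) (Fin 3) K}
    (hM : M = upperGenerator c a b * (cyclicPerm * upperGenerator c a b * cyclicPerm⁻¹)) :
    (M ^ 2) 1 0 = 0 ∧ (M ^ 2) 2 0 = 0 ∧ (M ^ 2) 2 1 = 0 ∧
      (M ^ 2) 0 0 = -c ^ 2 ∧ (M ^ 2) 1 1 = -c ^ 2 ∧ (M ^ 2) 2 2 = (c ^ 4)⁻¹ := by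
  rw [hM, upperGenerator_mul_conj_cyclicPerm hc]
  have htr : c - c * a * b + c = 0 := by linear_combination (-c) * hab
  obtain ⟨h10, h20, h21, h00, h11, h22⟩ := sq_apply_of_traceless_block
    (of ![![c - c * a * b, a * c ^ 2, a ^ 2 - b], ![-b, c, c⁻¹ * a], ![0, 0, c⁻¹ ^ 2]])
    rfl rfl htr
  refine ⟨h10, h20, h21, h00.trans ?_, h11.trans ?_, h22.trans ?_⟩ <;> simp <;> ring

end

theorem R1R2_sq_upper_triangular (p : ℕ) (hp : 0 < p) (τ : ℂ)
    (hτ : ‖τ‖ ^ 2 = 2)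
    (ψ : ℝ) (hψ : ψ = 2 * π / p)
    (J R₁ R₂ : Matrix (Fin 3) (Fin 3) ℂ)
    (hJ : J = Matrix.of ![![0, 0, 1], ![1, 0, 0], ![0, 1, 0]])
    (hR : R₁ = Matrix.of
      ![![Complex.exp (2 * I * ψ / 3), τ, -Complex.exp (I * ψ / 3) * (starRingEnd ℂ) τ],
        ![0, Complex.exp (-I * ψ / 3), 0],
        ![0, 0, Complex.exp (-I * ψ / 3)]])
    (hR2 : R₂ = J * R₁ * J⁻¹) :
    ((R₁ * R₂) ^ 2) 1 0 = 0 ∧ ((R₁ * R₂) ^ 2) 2 0 = 0 ∧ ((R₁ * R₂) ^ 2) 2 1 = 0 ∧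
    ((R₁ * R₂) ^ 2) 0 0 = -Complex.exp (4 * π * I / (3 * p)) ∧
    ((R₁ * R₂) ^ 2) 1 1 = -Complex.exp (4 * π * I / (3 * p)) ∧
    ((R₁ * R₂) ^ 2) 2 2 = Complex.exp (-8 * π * I / (3 * p)) ∧
    ((R₁ * R₂) ^ 2) 2 2 / ((R₁ * R₂) ^ 2) 0 0 = -Complex.exp (-4 * π * I / p) ∧
    -Complex.exp (-4 * π * I / p) = Complex.exp (I * (((p : ℂ) - 4) * π / p)) := by
  have hp' : (p : ℂ) ≠ 0 := by exact_mod_cast hp.ne'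
  have hττ : τ * starRingEnd ℂ τ = 2 := by
    rw [mul_conj, normSq_eq_norm_sq, hτ]; norm_num
  obtain ⟨c, hc⟩ : ∃ c, Complex.exp (I * ψ / 3) = c := ⟨_, rfl⟩
  have hexp : ∀ (n : ℕ) (w : ℂ), w = n * (I * ψ / 3) → Complex.exp w = c ^ n := by
    rintro n w rfl
    rw [Complex.exp_nat_mul, hc]
  have hexp_neg : ∀ (n : ℕ) (w : ℂ), w = -(n * (I * ψ / 3)) → Complex.exp w = (c ^ n)⁻¹ := by
    rintro n w rfl
    rw [Complex.exp_neg, Complex.exp_nat_mul, hc]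
  have hR₁ : R₁ = upperGenerator c τ (starRingEnd ℂ τ) := by
    rw [hR, upperGenerator, hexp 2 (2 * I * ψ / 3) (by push_cast; ring),
      hexp_neg 1 (-I * ψ / 3) (by push_cast; ring), hc, pow_one]
  have hJ' : J = cyclicPerm := hJ
  obtain ⟨h10, h20, h21, h00, h11, h22⟩ :=
    sq_upperGenerator_mul_conj_cyclicPerm (M := R₁ * R₂) (hc ▸ Complex.exp_ne_zero _) hττ
      (by rw [hR2, hJ', hR₁])
  have e2 := hexp 2 (4 * π * I / (3 * p)) (by rw [hψ]; push_cast; field_simp; ring)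
  have e4 := hexp_neg 4 (-8 * π * I / (3 * p)) (by rw [hψ]; push_cast; field_simp; ring)
  have e6 := hexp_neg 6 (-4 * π * I / p) (by rw [hψ]; push_cast; field_simp; ring)
  refine ⟨h10, h20, h21, by rw [h00, e2], by rw [h11, e2], by rw [h22, e4], ?_, ?_⟩
  · rw [h22, h00, e6]
    field_simp
  · rw [show I * ((p - 4) * π / p) = π * I + -4 * π * I / p by field_simp; ring,
      Complex.exp_add, Complex.exp_pi_mul_I]
    ring
end
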